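/- Let A be a real n×m matrix, T and Δ disjoint subsets of {1,…,m} with A_TᵀA_T invertible, and suppose ‖A_T c‖₂² ≥ (1−δ)‖c‖₂² for all c (with 0 ≤ δ < 1) and ‖A_TᵀA_Δ‖ ≤ θ (operator norm). Let x be a random vector in ℝ^m with x_i = 0 a.s. for i ∉ T ∪ Δ, let w be a random vector in ℝⁿ independent of x with E[w] = 0 and E[w wᵀ] = σ² I_n, let y = A x + w, and define x̂ by (x̂)_T = (A_TᵀA_T)^{−1}A_Tᵀ y, zero off T, and β := x − x̂. Then max_{i ∈ T} E[β_i²] ≤ (θ²/(1−δ)²)·λ_max(E[(x)_Δ (x)_Δᵀ]) + σ²/(1−δ), where λ_max denotes the largest eigenvalue. In particular, if min_{i ∈ T ∪ Δ, x_i ≢ 0} E[x_i²] ≥ (θ²/(1−δ)²)·λ_max(E[(x)_Δ (x)_Δᵀ]) + σ²/(1−δ), then max_{i ∈ T} E[β_i²] ≤ min over the nonzero coordinates of E[x_i²], i.e., β is compressible along T. -/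

import Mathlib

/-!
For `i ∈ T`, substituting `y = A_T x_T + A_Δ x_Δ + w` into the least-squares estimate gives
`β_i = -(v ⬝ x_Δ + c ⬝ w)`, where `c` and `v` are the `i`-th rows of `A_T† = (A_Tᵀ A_T)⁻¹ A_Tᵀ`
and of `A_T† A_Δ`. Independence and `E[w] = 0` kill the cross term, so
`E[β_i²] = vᵀ E[x_Δ x_Δᵀ] v + σ² ‖c‖²`. Here `‖c‖² = ((A_Tᵀ A_T)⁻¹)_ii ≤ 1/(1-δ)`, and
`v = (A_Tᵀ A_Δ)ᵀ (A_Tᵀ A_T)⁻¹ e_i` has `‖v‖ ≤ θ/(1-δ)`, while the quadratic form is at most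
`λ_max ‖v‖²`, with `λ_max ≥ 0` because the second-moment matrix is positive semidefinite.
-/

open Matrix MeasureTheory ProbabilityTheory

/-- The submatrix of `A` formed by the columns indexed by the set `T`. -/
def colSub {n m : ℕ} (A : Matrix (Fin n) (Fin m) ℝ) (T : Finset (Fin m)) :
    Matrix (Fin n) ↥T ℝ :=
  A.submatrix id ((↑) : ↥T → Fin m)

/-- The covariance-type matrix `E[(x)_Δ (x)_Δᵀ]` of the random vector `x`
restricted to the index set `Δ`. -/
noncomputable def covOn {Ω : Type*} [MeasurableSpace Ω] (P : Measure Ω)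
    {m : ℕ} (Δ : Finset (Fin m)) (x : Ω → Fin m → ℝ) : Matrix ↥Δ ↥Δ ℝ :=
  fun i j => ∫ ω, x ω i * x ω j ∂P

namespace Matrix

variable {ι κ : Type*} [Fintype ι] [Fintype κ]

lemma dotProduct_transpose_mul_self_mulVec (A : Matrix κ ι ℝ) (u : ι → ℝ) :
    u ⬝ᵥ (Aᵀ * A) *ᵥ u = ∑ r, (A *ᵥ u) r ^ 2 := by
  rw [← mulVec_mulVec, dotProduct_mulVec, vecMul_transpose]
  simp [dotProduct, sq]

lemma sum_sq_transpose_mulVec_le {C : Matrix ι κ ℝ} {θ : ℝ}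
    (hθ : ∀ z : κ → ℝ, √(∑ i, (C *ᵥ z) i ^ 2) ≤ θ * √(∑ j, z j ^ 2)) (u : ι → ℝ) :
    ∑ j, (Cᵀ *ᵥ u) j ^ 2 ≤ θ ^ 2 * ∑ i, u i ^ 2 := by
  set z := Cᵀ *ᵥ u
  have hz : ∑ j, z j ^ 2 = (C *ᵥ z) ⬝ᵥ u := by
    rw [dotProduct_comm, dotProduct_mulVec, ← mulVec_transpose]
    simp [z, dotProduct, sq]
  have hz0 : 0 ≤ ∑ j, z j ^ 2 := by positivity
  have hCz0 : 0 ≤ ∑ i, (C *ᵥ z) i ^ 2 := by positivity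
  have hCz : ∑ i, (C *ᵥ z) i ^ 2 ≤ θ ^ 2 * ∑ j, z j ^ 2 := by
    nlinarith [hθ z, Real.sq_sqrt hCz0, Real.sq_sqrt hz0, Real.sqrt_nonneg (∑ i, (C *ᵥ z) i ^ 2),
      Real.sqrt_nonneg (∑ j, z j ^ 2)]
  have hsq : (∑ j, z j ^ 2) * ∑ j, z j ^ 2 ≤ (∑ j, z j ^ 2) * (θ ^ 2 * ∑ i, u i ^ 2) := by
    calc (∑ j, z j ^ 2) * ∑ j, z j ^ 2 = ((C *ᵥ z) ⬝ᵥ u) ^ 2 := by rw [← hz, sq]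
      _ ≤ (∑ i, (C *ᵥ z) i ^ 2) * ∑ i, u i ^ 2 := Finset.sum_mul_sq_le_sq_mul_sq _ _ _
      _ ≤ (θ ^ 2 * ∑ j, z j ^ 2) * ∑ i, u i ^ 2 := by gcongr
      _ = (∑ j, z j ^ 2) * (θ ^ 2 * ∑ i, u i ^ 2) := by ring
  rcases hz0.eq_or_lt with h | h
  · rw [← h]; positivity
  · exact le_of_mul_le_mul_left hsq h

variable [DecidableEq ι]

lemma IsHermitian.dotProduct_mulVec_le_iSup_eigenvalues_mul {S : Matrix ι ι ℝ}
    (hS : S.IsHermitian) (v : ι → ℝ) :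
    v ⬝ᵥ S *ᵥ v ≤ (⨆ j, hS.eigenvalues j) * ∑ i, v i ^ 2 := by
  set U : Matrix ι ι ℝ := (hS.eigenvectorUnitary : Matrix ι ι ℝ)
  set u := Uᵀ *ᵥ v
  have hvU : v ᵥ* U = u := (mulVec_transpose U v).symm
  have hUU : U * Uᵀ = 1 := by
    simpa [star_eq_conjTranspose] using mem_unitaryGroup_iff.mp hS.eigenvectorUnitary.2
  have hquad : v ⬝ᵥ S *ᵥ v = ∑ j, hS.eigenvalues j * u j ^ 2 := by
    conv_lhs => rw [hS.spectral_theorem, Unitary.conjStarAlgAut_apply, ← mulVec_mulVec,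
      ← mulVec_mulVec, dotProduct_mulVec, hvU]
    simp [u, U, star_eq_conjTranspose, dotProduct, mulVec_diagonal, sq, mul_left_comm]
  have hnorm : ∑ i, v i ^ 2 = ∑ j, u j ^ 2 := by
    have h : u ⬝ᵥ u = v ⬝ᵥ v := by
      nth_rewrite 1 [← hvU]
      rw [← dotProduct_mulVec, mulVec_mulVec, hUU, one_mulVec]
    simpa [dotProduct, sq] using h.symm
  rw [hquad, hnorm, Finset.mul_sum]
  gcongr with j
  exact le_ciSup (Set.finite_range _).bddAbove j

lemma IsHermitian.iSup_eigenvalues_nonneg {S : Matrix ι ι ℝ} (hS : S.IsHermitian)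
    (hpos : ∀ v : ι → ℝ, 0 ≤ v ⬝ᵥ S *ᵥ v) : 0 ≤ ⨆ j, hS.eigenvalues j := by
  rcases isEmpty_or_nonempty ι with hι | ⟨⟨j⟩⟩
  · rw [Real.iSup_of_isEmpty]
  · exact ((PosSemidef.of_dotProduct_mulVec_nonneg hS hpos).eigenvalues_nonneg j).trans
      (le_ciSup (Set.finite_range _).bddAbove j)

section Coercive

variable {G : Matrix ι ι ℝ} {a : ℝ} (hG : IsUnit G) (ha : 0 < a)
  (hcoer : ∀ u : ι → ℝ, a * ∑ i, u i ^ 2 ≤ u ⬝ᵥ G *ᵥ u)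
include hG ha hcoer

lemma sum_sq_inv_mulVec_le (v : ι → ℝ) : ∑ i, (G⁻¹ *ᵥ v) i ^ 2 ≤ (∑ i, v i ^ 2) / a ^ 2 := by
  set u := G⁻¹ *ᵥ v
  have hGu : G *ᵥ u = v := by
    rw [mulVec_mulVec, mul_nonsing_inv _ ((isUnit_iff_isUnit_det G).mp hG), one_mulVec]
  have hcs : (u ⬝ᵥ v) ^ 2 ≤ (∑ i, u i ^ 2) * ∑ i, v i ^ 2 := Finset.sum_mul_sq_le_sq_mul_sq _ _ _
  have hau : a * ∑ i, u i ^ 2 ≤ u ⬝ᵥ v := hGu ▸ hcoer u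
  have hu0 : 0 ≤ ∑ i, u i ^ 2 := by positivity
  rw [le_div_iff₀ (by positivity)]
  have hsq : (a * ∑ i, u i ^ 2) ^ 2 ≤ (u ⬝ᵥ v) ^ 2 := pow_le_pow_left₀ (by positivity) hau 2
  rcases hu0.eq_or_lt with h | h
  · rw [← h, zero_mul]; positivity
  · exact le_of_mul_le_mul_left (by nlinarith) h

lemma inv_apply_self_le (i : ι) : G⁻¹ i i ≤ 1 / a := by
  set u := G⁻¹ *ᵥ Pi.single i 1
  have hui : u i = G⁻¹ i i := by simp [u, mulVec_single]
  have hGu : u ⬝ᵥ G *ᵥ u = u i := by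
    rw [mulVec_mulVec, mul_nonsing_inv _ ((isUnit_iff_isUnit_det G).mp hG), one_mulVec,
      dotProduct_single, mul_one]
  have hsq : u i ^ 2 ≤ ∑ j, u j ^ 2 :=
    Finset.single_le_sum (f := fun j => u j ^ 2) (fun j _ => sq_nonneg _) (Finset.mem_univ i)
  have hau : a * u i ^ 2 ≤ u i := (mul_le_mul_of_nonneg_left hsq ha.le).trans (hGu ▸ hcoer u)
  rw [← hui, le_div_iff₀ ha]
  nlinarith

end Coercive

lemma isSymm_inv_transpose_mul_self (A : Matrix κ ι ℝ) : (Aᵀ * A)⁻¹.IsSymm :=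
  IsSymm.inv (by rw [IsSymm, transpose_mul, transpose_transpose])

noncomputable def leftPinv (A : Matrix κ ι ℝ) : Matrix ι κ ℝ := (Aᵀ * A)⁻¹ * Aᵀ

section LeftPinv

variable {A : Matrix κ ι ℝ} (hA : IsUnit (Aᵀ * A))
include hA

lemma leftPinv_mul_self : leftPinv A * A = 1 := by
  rw [leftPinv, Matrix.mul_assoc, nonsing_inv_mul _ ((isUnit_iff_isUnit_det _).mp hA)]

lemma leftPinv_mul_transpose_leftPinv : leftPinv A * (leftPinv A)ᵀ = (Aᵀ * A)⁻¹ := by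
  rw [leftPinv, transpose_mul, (isSymm_inv_transpose_mul_self A).eq, transpose_transpose,
    ← Matrix.mul_assoc, Matrix.mul_assoc _ Aᵀ A,
    nonsing_inv_mul _ ((isUnit_iff_isUnit_det _).mp hA), Matrix.one_mul]

variable {a : ℝ} (ha : 0 < a) (hlow : ∀ c : ι → ℝ, a * ∑ i, c i ^ 2 ≤ ∑ r, (A *ᵥ c) r ^ 2)
include ha hlow

lemma sum_sq_leftPinv_apply_le (i : ι) : ∑ r, leftPinv A i r ^ 2 ≤ 1 / a := by
  have hdiag : (leftPinv A * (leftPinv A)ᵀ) i i = ∑ r, leftPinv A i r ^ 2 := by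
    simp [mul_apply, sq]
  rw [← hdiag, leftPinv_mul_transpose_leftPinv hA]
  exact inv_apply_self_le hA ha
    (fun u => (dotProduct_transpose_mul_self_mulVec A u).symm ▸ hlow u) i

lemma sum_sq_leftPinv_mul_apply_le {μ : Type*} [Fintype μ] {B : Matrix κ μ ℝ} {θ : ℝ}
    (hθ : ∀ z : μ → ℝ, √(∑ i, ((Aᵀ * B) *ᵥ z) i ^ 2) ≤ θ * √(∑ j, z j ^ 2)) (i : ι) :
    ∑ j, (leftPinv A * B) i j ^ 2 ≤ θ ^ 2 / a ^ 2 := by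
  have hsymm : (Aᵀ * A)⁻¹ i = (Aᵀ * A)⁻¹ *ᵥ Pi.single i 1 := by
    ext j
    simpa [mulVec_single_one] using ((isSymm_inv_transpose_mul_self A).apply i j).symm
  have hrow : (leftPinv A * B) i = (Aᵀ * B)ᵀ *ᵥ ((Aᵀ * A)⁻¹ *ᵥ Pi.single i 1) := by
    rw [leftPinv, Matrix.mul_assoc, mul_apply_eq_vecMul, mulVec_transpose, hsymm]
  have hcol := sum_sq_inv_mulVec_le hA ha
    (fun u => (dotProduct_transpose_mul_self_mulVec A u).symm ▸ hlow u) (Pi.single i 1)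
  rw [hrow]
  calc _ ≤ θ ^ 2 * ∑ k, ((Aᵀ * A)⁻¹ *ᵥ Pi.single i 1) k ^ 2 := sum_sq_transpose_mulVec_le hθ _
    _ ≤ θ ^ 2 * (1 / a ^ 2) := by
      gcongr
      simpa [Pi.single_apply] using hcol
    _ = θ ^ 2 / a ^ 2 := by ring

end LeftPinv

end Matrix

section LeastSquares

variable {n m : ℕ} (A : Matrix (Fin n) (Fin m) ℝ) {T Δ : Finset (Fin m)}

lemma mulVec_eq_colSub_mulVec_add_colSub_mulVec (hdisj : Disjoint T Δ) {x : Fin m → ℝ}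
    (hx : ∀ k ∉ T ∪ Δ, x k = 0) :
    A *ᵥ x = colSub A T *ᵥ (fun k : T => x k) + colSub A Δ *ᵥ (fun k : Δ => x k) := by
  ext r
  have hsupp : ∀ k ∈ Finset.univ, k ∉ T ∪ Δ → A r k * x k = 0 := fun k _ hk => by
    rw [hx k hk, mul_zero]
  calc (A *ᵥ x) r = ∑ k ∈ T ∪ Δ, A r k * x k :=
        (Finset.sum_subset (Finset.subset_univ _) hsupp).symm
    _ = ∑ k ∈ T, A r k * x k + ∑ k ∈ Δ, A r k * x k := Finset.sum_union hdisj
    _ = _ := by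
      rw [← Finset.sum_coe_sort T, ← Finset.sum_coe_sort Δ]
      rfl

lemma sub_leftPinv_colSub_mulVec_apply (hdisj : Disjoint T Δ)
    (hinv : IsUnit ((colSub A T)ᵀ * colSub A T)) {x : Fin m → ℝ}
    (hx : ∀ k ∉ T ∪ Δ, x k = 0) (w : Fin n → ℝ) (i : T) :
    x i - (leftPinv (colSub A T) *ᵥ (A *ᵥ x + w)) i =
      -((leftPinv (colSub A T) * colSub A Δ) i ⬝ᵥ (fun k : Δ => x k) +
        leftPinv (colSub A T) i ⬝ᵥ w) := by
  rw [mulVec_eq_colSub_mulVec_add_colSub_mulVec A hdisj hx, mulVec_add, mulVec_add,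
    mulVec_mulVec, mulVec_mulVec, leftPinv_mul_self hinv, one_mulVec]
  simp only [Pi.add_apply]
  rw [mulVec, mulVec]
  ring

end LeastSquares

section SecondMoments

variable {Ω ι κ : Type*} [MeasurableSpace Ω] {P : Measure Ω} [Fintype ι] [Fintype κ]
  {X : Ω → ι → ℝ}

lemma dotProduct_mul_dotProduct (a u : ι → ℝ) (b v : κ → ℝ) :
    (a ⬝ᵥ u) * (b ⬝ᵥ v) = ∑ j, ∑ k, a j * b k * (u j * v k) := by
  simp only [dotProduct, Finset.sum_mul_sum]
  exact Finset.sum_congr rfl fun j _ => Finset.sum_congr rfl fun k _ => by ring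

lemma integrable_dotProduct_mul_dotProduct {Y : Ω → κ → ℝ}
    (hXY : ∀ j k, Integrable (fun ω => X ω j * Y ω k) P) (a : ι → ℝ) (b : κ → ℝ) :
    Integrable (fun ω => (a ⬝ᵥ X ω) * (b ⬝ᵥ Y ω)) P := by
  simp only [dotProduct_mul_dotProduct]
  exact integrable_finsetSum _ fun j _ =>
    integrable_finsetSum _ fun k _ => (hXY j k).const_mul _

lemma integral_dotProduct_mul_dotProduct {Y : Ω → κ → ℝ}
    (hXY : ∀ j k, Integrable (fun ω => X ω j * Y ω k) P) (a : ι → ℝ) (b : κ → ℝ) :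
    ∫ ω, (a ⬝ᵥ X ω) * (b ⬝ᵥ Y ω) ∂P =
      a ⬝ᵥ (of fun j k => ∫ ω, X ω j * Y ω k ∂P) *ᵥ b := by
  simp only [dotProduct_mul_dotProduct]
  rw [integral_finsetSum _ fun j _ => integrable_finsetSum _ fun k _ => (hXY j k).const_mul _]
  simp only [integral_finsetSum _ fun k _ => (hXY _ k).const_mul _, integral_const_mul]
  simp only [dotProduct, mulVec, of_apply, Finset.mul_sum]
  exact Finset.sum_congr rfl fun j _ => Finset.sum_congr rfl fun k _ => by ring

lemma integral_sq_dotProduct_add_dotProduct [DecidableEq κ] {W : Ω → κ → ℝ} {σ : ℝ}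
    (hXW : IndepFun X W P)
    (hX1 : ∀ j, Integrable (fun ω => X ω j) P)
    (hX2 : ∀ j k, Integrable (fun ω => X ω j * X ω k) P)
    (hW1 : ∀ r, Integrable (fun ω => W ω r) P)
    (hW2 : ∀ r s, Integrable (fun ω => W ω r * W ω s) P)
    (hWmean : ∀ r, ∫ ω, W ω r ∂P = 0)
    (hWcov : ∀ r s, ∫ ω, W ω r * W ω s ∂P = if r = s then σ ^ 2 else 0) (a : ι → ℝ) (b : κ → ℝ) :
    ∫ ω, (a ⬝ᵥ X ω + b ⬝ᵥ W ω) ^ 2 ∂P =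
      a ⬝ᵥ (of fun j k => ∫ ω, X ω j * X ω k ∂P) *ᵥ a + σ ^ 2 * ∑ r, b r ^ 2 := by
  have hindep : ∀ j r, IndepFun (fun ω => X ω j) (fun ω => W ω r) P := fun j r =>
    hXW.comp (measurable_pi_apply j) (measurable_pi_apply r)
  have hXW2 : ∀ j r, Integrable (fun ω => X ω j * W ω r) P := fun j r =>
    (hindep j r).integrable_mul (hX1 j) (hW1 r)
  have hcross : (of fun j r => ∫ ω, X ω j * W ω r ∂P) = 0 := by
    ext j r
    rw [of_apply, (hindep j r).integral_fun_mul_eq_mul_integral (hX1 j).1 (hW1 r).1, hWmean,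
      mul_zero, Matrix.zero_apply]
  have hnoise : (of fun r s => ∫ ω, W ω r * W ω s ∂P) = σ ^ 2 • (1 : Matrix κ κ ℝ) := by
    ext r s
    simp [hWcov, one_apply]
  have hexpand : ∀ ω, (a ⬝ᵥ X ω + b ⬝ᵥ W ω) ^ 2 =
      (a ⬝ᵥ X ω) * (a ⬝ᵥ X ω) + 2 * ((a ⬝ᵥ X ω) * (b ⬝ᵥ W ω)) + (b ⬝ᵥ W ω) * (b ⬝ᵥ W ω) :=
    fun ω => by ring
  have hiXX := integrable_dotProduct_mul_dotProduct hX2 a a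
  have hiXW := (integrable_dotProduct_mul_dotProduct hXW2 a b).const_mul 2
  have hiWW := integrable_dotProduct_mul_dotProduct hW2 b b
  simp only [hexpand]
  rw [integral_add (hiXX.fun_add hiXW) hiWW, integral_add hiXX hiXW, integral_const_mul,
    integral_dotProduct_mul_dotProduct hX2, integral_dotProduct_mul_dotProduct hXW2,
    integral_dotProduct_mul_dotProduct hW2, hcross, hnoise]
  simp only [smul_mulVec, one_mulVec, dotProduct_smul, zero_mulVec, dotProduct_zero, smul_eq_mul,
    mul_zero, add_zero]
  simp only [dotProduct, sq]

end SecondMoments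

theorem ls_error_compressible_general
    (n m : ℕ) (A : Matrix (Fin n) (Fin m) ℝ) (T Δ : Finset (Fin m))
    (hdisj : Disjoint T Δ) (δ θ σ : ℝ) (hδ1 : δ < 1)
    (hinv : IsUnit ((colSub A T)ᵀ * colSub A T))
    (h1 : ∀ c : ↥T → ℝ,
      (1 - δ) * ∑ i, (c i) ^ 2 ≤ ∑ r, ((colSub A T).mulVec c r) ^ 2)
    (hθ : ∀ z : ↥Δ → ℝ,
      Real.sqrt (∑ i, (((colSub A T)ᵀ * colSub A Δ).mulVec z i) ^ 2)
        ≤ θ * Real.sqrt (∑ i, (z i) ^ 2))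
    {Ω : Type*} [MeasurableSpace Ω] (P : Measure Ω)
    (x : Ω → Fin m → ℝ) (w : Ω → Fin n → ℝ)
    (hxsupp : ∀ i : Fin m, i ∉ T → i ∉ Δ → ∀ᵐ ω ∂P, x ω i = 0)
    (hindep : IndepFun x w P)
    (hx1 : ∀ i : Fin m, Integrable (fun ω => x ω i) P)
    (hx2 : ∀ i j : Fin m, Integrable (fun ω => x ω i * x ω j) P)
    (hw1 : ∀ r : Fin n, Integrable (fun ω => w ω r) P)
    (hw2 : ∀ r s : Fin n, Integrable (fun ω => w ω r * w ω s) P)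
    (hwmean : ∀ r : Fin n, ∫ ω, w ω r ∂P = 0)
    (hwcov : ∀ r s : Fin n, ∫ ω, w ω r * w ω s ∂P = if r = s then σ ^ 2 else 0)
    (y : Ω → Fin n → ℝ) (hy : ∀ ω, y ω = A.mulVec (x ω) + w ω)
    (xhat : Ω → Fin m → ℝ)
    (hxhatT : ∀ ω, ∀ i : ↥T, xhat ω i =
      (((colSub A T)ᵀ * colSub A T)⁻¹ * (colSub A T)ᵀ).mulVec (y ω) i)
    (β : Ω → Fin m → ℝ) (hβ : ∀ ω, β ω = x ω - xhat ω)
    (hherm : (covOn P Δ x).IsHermitian) :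
    (∀ i ∈ T, ∫ ω, (β ω i) ^ 2 ∂P ≤
      (θ ^ 2 / (1 - δ) ^ 2) * (⨆ j : ↥Δ, hherm.eigenvalues j) + σ ^ 2 / (1 - δ)) ∧
    ((∀ i ∈ T ∪ Δ, ¬ (∀ᵐ ω ∂P, x ω i = 0) →
        (θ ^ 2 / (1 - δ) ^ 2) * (⨆ j : ↥Δ, hherm.eigenvalues j) + σ ^ 2 / (1 - δ)
          ≤ ∫ ω, (x ω i) ^ 2 ∂P) →
      ∀ i ∈ T, ∀ i' ∈ T ∪ Δ, ¬ (∀ᵐ ω ∂P, x ω i' = 0) →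
        ∫ ω, (β ω i) ^ 2 ∂P ≤ ∫ ω, (x ω i') ^ 2 ∂P) := by
  have hδ : 0 < 1 - δ := sub_pos.2 hδ1
  set xΔ : Ω → Δ → ℝ := fun ω j => x ω j
  have hxΔ2 : ∀ j k : Δ, Integrable (fun ω => xΔ ω j * xΔ ω k) P := fun j k => hx2 j k
  have hindepΔ : IndepFun xΔ w P :=
    hindep.comp (φ := fun z (j : Δ) => z j) (measurable_pi_lambda _ fun j => measurable_pi_apply _)
      measurable_id
  have htop : 0 ≤ ⨆ j : Δ, hherm.eigenvalues j := hherm.iSup_eigenvalues_nonneg fun v =>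
    integral_dotProduct_mul_dotProduct hxΔ2 v v ▸ integral_nonneg fun ω => mul_self_nonneg _
  have hsupp : ∀ᵐ ω ∂P, ∀ k ∉ T ∪ Δ, x ω k = 0 :=
    (ae_ball_iff (Set.to_countable (↑(T ∪ Δ))ᶜ)).2 fun k hk =>
      hxsupp k (Finset.notMem_union.1 hk).1 (Finset.notMem_union.1 hk).2
  have hbound : ∀ i ∈ T, ∫ ω, (β ω i) ^ 2 ∂P ≤
      (θ ^ 2 / (1 - δ) ^ 2) * (⨆ j : ↥Δ, hherm.eigenvalues j) + σ ^ 2 / (1 - δ) := by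
    intro i hi
    set v := (leftPinv (colSub A T) * colSub A Δ) ⟨i, hi⟩
    set c := leftPinv (colSub A T) ⟨i, hi⟩
    have hβ_ae : (fun ω => β ω i ^ 2) =ᵐ[P] fun ω => (v ⬝ᵥ xΔ ω + c ⬝ᵥ w ω) ^ 2 := by
      filter_upwards [hsupp] with ω hω
      rw [hβ, Pi.sub_apply, hxhatT ω ⟨i, hi⟩, hy]
      exact (congrArg (· ^ 2)
        (sub_leftPinv_colSub_mulVec_apply A hdisj hinv hω (w ω) ⟨i, hi⟩)).trans (neg_sq _)
    rw [integral_congr_ae hβ_ae, integral_sq_dotProduct_add_dotProduct hindepΔ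
      (fun j => hx1 j) hxΔ2 hw1 hw2 hwmean hwcov]
    have hv := sum_sq_leftPinv_mul_apply_le hinv hδ h1 hθ ⟨i, hi⟩
    have hc := sum_sq_leftPinv_apply_le hinv hδ h1 ⟨i, hi⟩
    calc _ ≤ (⨆ j : ↥Δ, hherm.eigenvalues j) * (θ ^ 2 / (1 - δ) ^ 2) + σ ^ 2 * (1 / (1 - δ)) :=
          add_le_add ((hherm.dotProduct_mulVec_le_iSup_eigenvalues_mul v).trans
            (mul_le_mul_of_nonneg_left hv htop)) (mul_le_mul_of_nonneg_left hc (sq_nonneg σ))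
      _ = _ := by ring
  exact ⟨hbound, fun hyp i hi i' hi' hx => (hbound i hi).trans (hyp i' hi' hx)⟩

/-- **Theorem 1, part 1 (compressibility of the LS error).**
With `A_T` satisfying `‖A_T c‖₂² ≥ (1−δ)‖c‖₂²` (`0 ≤ δ < 1`) and
`‖A_Tᵀ A_Δ‖ ≤ θ`, `x` a random vector supported (a.s.) on `T ∪ Δ`, `w` an
independent noise with `E[w] = 0`, `E[w wᵀ] = σ² I`, `y = Ax + w`, `x̂` the LS
estimate on `T` and `β = x − x̂`:
`max_{i ∈ T} E[β_i²] ≤ (θ²/(1−δ)²) λ_max(E[(x)_Δ(x)_Δᵀ]) + σ²/(1−δ)`.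
In particular, if every not-identically-zero coordinate of `x` satisfies
`E[x_i²] ≥ (θ²/(1−δ)²) λ_max(E[(x)_Δ(x)_Δᵀ]) + σ²/(1−δ)`, then
`max_{i ∈ T} E[β_i²] ≤ min` over those coordinates of `E[x_i²]`, i.e. `β` is
compressible along `T`. -/
theorem ls_error_compressible
    (n m : ℕ) (A : Matrix (Fin n) (Fin m) ℝ) (T Δ : Finset (Fin m))
    (hdisj : Disjoint T Δ) (δ θ σ : ℝ) (hδ0 : 0 ≤ δ) (hδ1 : δ < 1)
    (hinv : IsUnit ((colSub A T)ᵀ * colSub A T))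
    (h1 : ∀ c : ↥T → ℝ,
      (1 - δ) * ∑ i, (c i) ^ 2 ≤ ∑ r, ((colSub A T).mulVec c r) ^ 2)
    (hθ : ∀ z : ↥Δ → ℝ,
      Real.sqrt (∑ i, (((colSub A T)ᵀ * colSub A Δ).mulVec z i) ^ 2)
        ≤ θ * Real.sqrt (∑ i, (z i) ^ 2))
    {Ω : Type*} [MeasurableSpace Ω] (P : Measure Ω) [IsProbabilityMeasure P]
    (x : Ω → Fin m → ℝ) (w : Ω → Fin n → ℝ)
    (hxm : Measurable x) (hwm : Measurable w)
    (hxsupp : ∀ i : Fin m, i ∉ T → i ∉ Δ → ∀ᵐ ω ∂P, x ω i = 0)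
    (hindep : IndepFun x w P)
    (hx1 : ∀ i : Fin m, Integrable (fun ω => x ω i) P)
    (hx2 : ∀ i j : Fin m, Integrable (fun ω => x ω i * x ω j) P)
    (hw1 : ∀ r : Fin n, Integrable (fun ω => w ω r) P)
    (hw2 : ∀ r s : Fin n, Integrable (fun ω => w ω r * w ω s) P)
    (hwmean : ∀ r : Fin n, ∫ ω, w ω r ∂P = 0)
    (hwcov : ∀ r s : Fin n, ∫ ω, w ω r * w ω s ∂P = if r = s then σ ^ 2 else 0)
    (y : Ω → Fin n → ℝ) (hy : ∀ ω, y ω = A.mulVec (x ω) + w ω)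
    (xhat : Ω → Fin m → ℝ)
    (hxhatT : ∀ ω, ∀ i : ↥T, xhat ω i =
      (((colSub A T)ᵀ * colSub A T)⁻¹ * (colSub A T)ᵀ).mulVec (y ω) i)
    (hxhat0 : ∀ ω, ∀ i : Fin m, i ∉ T → xhat ω i = 0)
    (β : Ω → Fin m → ℝ) (hβ : ∀ ω, β ω = x ω - xhat ω)
    (hherm : (covOn P Δ x).IsHermitian) :
    (∀ i ∈ T, ∫ ω, (β ω i) ^ 2 ∂P ≤
      (θ ^ 2 / (1 - δ) ^ 2) * (⨆ j : ↥Δ, hherm.eigenvalues j) + σ ^ 2 / (1 - δ)) ∧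
    ((∀ i ∈ T ∪ Δ, ¬ (∀ᵐ ω ∂P, x ω i = 0) →
        (θ ^ 2 / (1 - δ) ^ 2) * (⨆ j : ↥Δ, hherm.eigenvalues j) + σ ^ 2 / (1 - δ)
          ≤ ∫ ω, (x ω i) ^ 2 ∂P) →
      ∀ i ∈ T, ∀ i' ∈ T ∪ Δ, ¬ (∀ᵐ ω ∂P, x ω i' = 0) →
        ∫ ω, (β ω i) ^ 2 ∂P ≤ ∫ ω, (x ω i') ^ 2 ∂P) :=
  ls_error_compressible_general n m A T Δ hdisj δ θ σ hδ1 hinv h1 hθ P x w hxsupp hindep hx1 hx2 hw1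
    hw2 hwmean hwcov y hy xhat hxhatT β hβ hherm
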